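/- Let (M,g) be a complete Riemannian manifold with vector field X satisfying Ric_X ≥ ε(n−1) g (ε>0) and Ric ≤ (n−1)g. If q ∈ M satisfies d(p,q) > ((n−1)π + |X(p)|)/((n−1)ε), then q is not a critical point of the distance function to p. -/

import Mathlib

/-!
Along a unit-speed minimal geodesic `γ` from `p` to `q` of length `d ≥ π`, the index form
evaluated on the plateau function `φ` (rising as `sin` on `[0, π/2]`, equal to `1` in the
middle, falling symmetrically on `[d − π/2, d]`) gives
`∫ Ric(γ', γ') ≤ ∫ (1 − φ²) Ric(γ', γ') + (n − 1) ∫ φ'² ≤ (n − 1) ∫ (1 − φ² + φ'²) = (n − 1) π`,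
using `Ric ≤ n − 1`; for `d ≤ π` this bound is immediate. Integrating
`Ric(γ', γ') + (d/dt) g(X, γ') ≥ ε(n − 1)` then yields
`g(X(q), γ'(d)) ≥ ε(n − 1) d − (n − 1) π − |X(p)| > 0`, so `V = X(q)` makes `q` non-critical.
-/

open RealInnerProductSpace Real Set intervalIntegral

theorem hasDerivAt_comp_min_of_deriv_eq_zero {f f' : ℝ → ℝ} {a : ℝ}
    (hf : ∀ x, HasDerivAt f (f' x) x) (ha : f' a = 0) (s : ℝ) :
    HasDerivAt (fun x => f (min x a)) (f' (min s a)) s := by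
  rcases lt_trichotomy s a with h | rfl | h
  · rw [min_eq_left h.le]
    refine (hf s).congr_of_eventuallyEq ?_
    filter_upwards [eventually_lt_nhds h] with x hx
    rw [min_eq_left hx.le]
  · rw [min_self, ← hasDerivWithinAt_univ, ← Iic_union_Ici]
    refine HasDerivWithinAt.union ?_ ?_
    · exact (hf s).hasDerivWithinAt.congr (fun x hx => by rw [min_eq_left hx]) (by rw [min_self])
    · rw [ha]
      exact (hasDerivWithinAt_const s _ (f s)).congr (fun x hx => by rw [min_eq_right hx])
        (by rw [min_self])
  · rw [min_eq_right h.le, ha]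
    refine (hasDerivAt_const s (f a)).congr_of_eventuallyEq ?_
    filter_upwards [eventually_gt_nhds h] with x hx
    rw [min_eq_right hx.le]

noncomputable def sinRamp (s : ℝ) : ℝ := sin (min s (π / 2))

theorem hasDerivAt_sinRamp (s : ℝ) : HasDerivAt sinRamp (cos (min s (π / 2))) s :=
  hasDerivAt_comp_min_of_deriv_eq_zero hasDerivAt_sin cos_pi_div_two s

theorem continuous_sinRamp : Continuous sinRamp := by
  unfold sinRamp; fun_prop

theorem sinRamp_zero : sinRamp 0 = 0 := by
  rw [sinRamp, min_eq_left (by positivity), sin_zero]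

theorem cos_min_pi_div_two_eq_zero {s : ℝ} (h : π / 2 ≤ s) : cos (min s (π / 2)) = 0 := by
  rw [min_eq_right h, cos_pi_div_two]

theorem integral_cos_min_pi_div_two_sq {d : ℝ} (hd : π / 2 ≤ d) :
    ∫ t in 0..d, cos (min t (π / 2)) ^ 2 = π / 4 := by
  have hc : Continuous fun t => cos (min t (π / 2)) ^ 2 := by fun_prop
  rw [← integral_add_adjacent_intervals (hc.intervalIntegrable 0 (π / 2))
    (hc.intervalIntegrable _ d)]
  have hrise : ∫ t in 0..π / 2, cos (min t (π / 2)) ^ 2 = ∫ t in 0..π / 2, cos t ^ 2 :=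
    integral_congr fun t ht => by
      rw [uIcc_of_le (by positivity)] at ht
      rw [min_eq_left ht.2]
  have hflat : ∫ t in π / 2..d, cos (min t (π / 2)) ^ 2 = 0 := by
    rw [integral_congr (g := fun _ => 0) fun t ht => by
      rw [uIcc_of_le hd] at ht
      rw [cos_min_pi_div_two_eq_zero ht.1, zero_pow two_ne_zero], integral_zero]
  rw [hrise, hflat, integral_cos_sq, cos_pi_div_two, sin_zero]
  ring

noncomputable def sinPlateau (d t : ℝ) : ℝ := sinRamp t * sinRamp (d - t)

theorem hasDerivAt_sinPlateau (d t : ℝ) :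
    HasDerivAt (sinPlateau d)
      (cos (min t (π / 2)) * sinRamp (d - t) - sinRamp t * cos (min (d - t) (π / 2))) t := by
  have hreflect : HasDerivAt (fun x => sinRamp (d - x)) (cos (min (d - t) (π / 2)) * -1) t :=
    (hasDerivAt_sinRamp (d - t)).comp t ((hasDerivAt_id t).const_sub d)
  exact ((hasDerivAt_sinRamp t).mul hreflect).congr_deriv (by ring)

theorem deriv_sinPlateau (d : ℝ) :
    deriv (sinPlateau d) =
      fun t => cos (min t (π / 2)) * sinRamp (d - t) - sinRamp t * cos (min (d - t) (π / 2)) :=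
  funext fun t => (hasDerivAt_sinPlateau d t).deriv

theorem continuous_sinPlateau (d : ℝ) : Continuous (sinPlateau d) := by
  unfold sinPlateau
  have := continuous_sinRamp
  fun_prop

theorem continuous_deriv_sinPlateau (d : ℝ) : Continuous (deriv (sinPlateau d)) := by
  rw [deriv_sinPlateau]
  have := continuous_sinRamp
  fun_prop

theorem sinPlateau_sq_le_one (d t : ℝ) : sinPlateau d t ^ 2 ≤ 1 := by
  rw [sinPlateau, mul_pow]
  exact mul_le_one₀ (sin_sq_le_one _) (sq_nonneg _) (sin_sq_le_one _)

theorem one_sub_sinPlateau_sq_add_deriv_sq {d : ℝ} (hd : π ≤ d) (t : ℝ) :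
    1 - sinPlateau d t ^ 2 + deriv (sinPlateau d) t ^ 2 =
      2 * cos (min t (π / 2)) ^ 2 + 2 * cos (min (d - t) (π / 2)) ^ 2 := by
  simp only [deriv_sinPlateau, sinPlateau, sinRamp]
  set u := min t (π / 2)
  set v := min (d - t) (π / 2)
  -- at every `t` one of the two ramps is already flat, since `d ≥ π`
  have hflat : cos u * cos v = 0 := by
    rcases le_total (π / 2) t with h | h
    · rw [cos_min_pi_div_two_eq_zero h, zero_mul]
    · rw [cos_min_pi_div_two_eq_zero (s := d - t) (by linarith), mul_zero]
  linear_combination (cos v ^ 2 - sin v ^ 2) * sin_sq_add_cos_sq u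
    + (2 * cos u ^ 2 - 1) * sin_sq_add_cos_sq v - (3 * cos u * cos v + 2 * sin u * sin v) * hflat

theorem integral_one_sub_sinPlateau_sq_add_deriv_sq {d : ℝ} (hd : π ≤ d) :
    ∫ t in 0..d, (1 - sinPlateau d t ^ 2 + deriv (sinPlateau d) t ^ 2) = π := by
  have hc : Continuous fun t => cos (min t (π / 2)) ^ 2 := by fun_prop
  have hd' : π / 2 ≤ d := by linarith [pi_pos]
  simp_rw [one_sub_sinPlateau_sq_add_deriv_sq hd]
  rw [integral_add (by apply Continuous.intervalIntegrable; fun_prop)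
      (by apply Continuous.intervalIntegrable; fun_prop),
    integral_const_mul, integral_const_mul,
    integral_comp_sub_left (fun t => cos (min t (π / 2)) ^ 2), sub_self, sub_zero,
    integral_cos_min_pi_div_two_sq hd']
  ring

theorem integral_le_mul_pi_of_index_form_nonneg {r : ℝ → ℝ} {c d : ℝ} (hr : Continuous r)
    (hc : 0 ≤ c) (hd : 0 ≤ d) (hle : ∀ t ∈ Icc 0 d, r t ≤ c)
    (hindex : ∀ φ : ℝ → ℝ, φ 0 = 0 → φ d = 0 → (∀ t, DifferentiableAt ℝ φ t) →
      Continuous (deriv φ) → 0 ≤ ∫ t in 0..d, (c * deriv φ t ^ 2 - φ t ^ 2 * r t)) :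
    ∫ t in 0..d, r t ≤ c * π := by
  rcases le_total d π with hdπ | hπd
  · calc ∫ t in 0..d, r t ≤ ∫ _ in 0..d, c :=
          integral_mono_on hd (hr.intervalIntegrable _ _) intervalIntegrable_const hle
      _ = d * c := by rw [integral_const, sub_zero, smul_eq_mul]
      _ ≤ c * π := by nlinarith
  set φ := sinPlateau d
  have hφ := continuous_sinPlateau d
  have hφ' := continuous_deriv_sinPlateau d
  have hindexφ := hindex φ (by simp [φ, sinPlateau, sinRamp_zero])
    (by simp [φ, sinPlateau, sinRamp_zero]) (fun t => (hasDerivAt_sinPlateau d t).differentiableAt)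
    hφ'
  have hsplit : (∫ t in 0..d, r t) + ∫ t in 0..d, (c * deriv φ t ^ 2 - φ t ^ 2 * r t) =
      ∫ t in 0..d, ((1 - φ t ^ 2) * r t + c * deriv φ t ^ 2) := by
    rw [← integral_add (hr.intervalIntegrable _ _)
      (by apply Continuous.intervalIntegrable; fun_prop)]
    congr 1 with t
    ring
  have hbound : ∫ t in 0..d, ((1 - φ t ^ 2) * r t + c * deriv φ t ^ 2) ≤
      ∫ t in 0..d, c * (1 - φ t ^ 2 + deriv φ t ^ 2) := by
    refine integral_mono_on hd (by apply Continuous.intervalIntegrable; fun_prop)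
      (by apply Continuous.intervalIntegrable; fun_prop) fun t ht => ?_
    have := mul_le_mul_of_nonneg_left (hle t ht) (sub_nonneg.2 (sinPlateau_sq_le_one d t))
    linarith
  rw [integral_const_mul, integral_one_sub_sinPlateau_sq_add_deriv_sq hπd] at hbound
  linarith

theorem mul_sub_integral_le_sub_of_le_add_deriv {f r : ℝ → ℝ} {κ d : ℝ} (hd : 0 ≤ d)
    (hf : ∀ t, HasDerivAt f (deriv f t) t) (hf' : Continuous (deriv f)) (hr : Continuous r)
    (hle : ∀ t ∈ Icc 0 d, κ ≤ r t + deriv f t) :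
    κ * d - ∫ t in 0..d, r t ≤ f d - f 0 := by
  rw [← integral_eq_sub_of_hasDerivAt (fun t _ => hf t) (hf'.intervalIntegrable _ _)]
  calc κ * d - ∫ t in 0..d, r t = ∫ t in 0..d, (κ - r t) := by
        rw [integral_sub intervalIntegrable_const (hr.intervalIntegrable _ _), integral_const,
          sub_zero, smul_eq_mul, mul_comm]
    _ ≤ ∫ t in 0..d, deriv f t :=
        integral_mono_on hd (by apply Continuous.intervalIntegrable; fun_prop)
          (hf'.intervalIntegrable _ _) fun t ht => by linarith [hle t ht]

/-- `ric γ t = Ric(γ'(t), γ'(t))`, `xg γ t = g(X(γ(t)), γ'(t))`, `startV γ = γ'(0)` and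
`endV γ = γ'(d(p,q))` along the minimal geodesics `γ : Geo p q`; `hricX` is
`Ric_X(γ', γ') ≥ ε(n−1)` via `(1/2)(L_X g)(γ', γ') = (d/dt) g(X∘γ, γ')`, and `hminimal` is
the nonnegativity of the index form of a minimal geodesic. -/
theorem stmt_11_general {M : Type*} [MetricSpace M]
    {T : M → Type*} [∀ x, NormedAddCommGroup (T x)] [∀ x, InnerProductSpace ℝ (T x)]
    (n : ℕ) (hn : 2 ≤ n) (ε : ℝ) (hε : 0 < ε)
    (X : ∀ x : M, T x)
    (Geo : M → M → Type*)
    (startV : ∀ {p q : M}, Geo p q → T p)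
    (endV : ∀ {p q : M}, Geo p q → T q)
    (hstart_unit : ∀ {p q : M} (γ : Geo p q), ‖startV γ‖ = 1)
    (ric xg : ∀ {p q : M}, Geo p q → ℝ → ℝ)
    (hxg0 : ∀ {p q : M} (γ : Geo p q), xg γ 0 = ⟪X p, startV γ⟫)
    (hxgd : ∀ {p q : M} (γ : Geo p q), xg γ (dist p q) = ⟪X q, endV γ⟫)
    (hric_cont : ∀ {p q : M} (γ : Geo p q), Continuous (ric γ))
    (hxg_deriv : ∀ {p q : M} (γ : Geo p q) (t : ℝ), HasDerivAt (xg γ) (deriv (xg γ) t) t)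
    (hxg_deriv_cont : ∀ {p q : M} (γ : Geo p q), Continuous (deriv (xg γ)))
    (hricX : ∀ {p q : M} (γ : Geo p q), ∀ t ∈ Set.Icc (0 : ℝ) (dist p q),
      ε * ((n : ℝ) - 1) ≤ ric γ t + deriv (xg γ) t)
    (hric_le : ∀ {p q : M} (γ : Geo p q), ∀ t ∈ Set.Icc (0 : ℝ) (dist p q),
      ric γ t ≤ (n : ℝ) - 1)
    (hminimal : ∀ {p q : M} (γ : Geo p q) (φ : ℝ → ℝ), φ 0 = 0 → φ (dist p q) = 0 →
      (∀ t, DifferentiableAt ℝ φ t) → Continuous (deriv φ) →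
      0 ≤ ∫ t in (0 : ℝ)..(dist p q),
        (((n : ℝ) - 1) * (deriv φ t) ^ 2 - (φ t) ^ 2 * ric γ t))
    (p q : M)
    (hd : (((n : ℝ) - 1) * Real.pi + ‖X p‖) / (((n : ℝ) - 1) * ε) < dist p q) :
    ¬ (∀ V : T q, ∃ γ : Geo p q, ⟪endV γ, V⟫ ≤ 0) := by
  intro hcrit
  obtain ⟨γ, hγ⟩ := hcrit (X q)
  have hn1 : 0 < (n : ℝ) - 1 := by
    have : (2 : ℝ) ≤ n := by exact_mod_cast hn
    linarith
  have hdist : ((n : ℝ) - 1) * π + ‖X p‖ < ε * ((n : ℝ) - 1) * dist p q := by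
    rw [div_lt_iff₀ (by positivity)] at hd
    linarith
  have hricci : ∫ t in 0..dist p q, ric γ t ≤ ((n : ℝ) - 1) * π :=
    integral_le_mul_pi_of_index_form_nonneg (hric_cont γ) hn1.le dist_nonneg (hric_le γ)
      (hminimal γ)
  have hgrowth := mul_sub_integral_le_sub_of_le_add_deriv dist_nonneg (hxg_deriv γ)
    (hxg_deriv_cont γ) (hric_cont γ) (hricX γ)
  have hstart : -‖X p‖ ≤ xg γ 0 := by
    have := abs_real_inner_le_norm (X p) (startV γ)
    rw [hstart_unit γ, mul_one] at this
    rw [hxg0]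
    exact neg_le_of_abs_le this
  have hend : 0 < ⟪endV γ, X q⟫ := by
    rw [real_inner_comm, ← hxgd]
    linarith
  exact hend.not_ge hγ

/-- Lemma 2.8: under the pinching `Ric_X ≥ ε(n−1) g` (`ε > 0`) and
`Ric ≤ (n−1) g`, if `d(p,q) > ((n−1)π + |X(p)|)/((n−1)ε)` then `q` is not a
critical point of the distance function to `p`.  Here `q` is critical to `p`
iff for every `V ∈ T_q M` there is a unit-speed minimal geodesic `γ` from
`p` to `q` with `g(γ'(d(p,q)), V) ≤ 0`; the Riemannian data along minimal
geodesics is recorded as in the fundamental estimate: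
`ric γ t = Ric(γ'(t),γ'(t))`, `xg γ t = g(X(γ(t)), γ'(t))`,
`startV γ = γ'(0)`, `endV γ = γ'(d(p,q))`, `hricX` is
`Ric_X(γ',γ') ≥ ε(n−1)` via `(1/2)(L_X g)(γ',γ') = (d/dt) g(X∘γ, γ')`,
`hric_le` is `Ric ≤ (n−1)g`, and `hminimal` records minimality via
nonnegativity of the index form. -/
theorem stmt_11 {M : Type*} [MetricSpace M]
    {T : M → Type*} [∀ x, NormedAddCommGroup (T x)] [∀ x, InnerProductSpace ℝ (T x)]
    (n : ℕ) (hn : 2 ≤ n) (ε : ℝ) (hε : 0 < ε)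
    (X : ∀ x : M, T x)
    (Geo : M → M → Type*)
    (geo_ne : ∀ p q : M, Nonempty (Geo p q))
    (startV : ∀ {p q : M}, Geo p q → T p)
    (endV : ∀ {p q : M}, Geo p q → T q)
    (hstart_unit : ∀ {p q : M} (γ : Geo p q), ‖startV γ‖ = 1)
    (hend_unit : ∀ {p q : M} (γ : Geo p q), ‖endV γ‖ = 1)
    (ric xg : ∀ {p q : M}, Geo p q → ℝ → ℝ)
    (hxg0 : ∀ {p q : M} (γ : Geo p q), xg γ 0 = ⟪X p, startV γ⟫)
    (hxgd : ∀ {p q : M} (γ : Geo p q), xg γ (dist p q) = ⟪X q, endV γ⟫)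
    (hric_cont : ∀ {p q : M} (γ : Geo p q), Continuous (ric γ))
    (hxg_deriv : ∀ {p q : M} (γ : Geo p q) (t : ℝ), HasDerivAt (xg γ) (deriv (xg γ) t) t)
    (hxg_deriv_cont : ∀ {p q : M} (γ : Geo p q), Continuous (deriv (xg γ)))
    (hricX : ∀ {p q : M} (γ : Geo p q), ∀ t ∈ Set.Icc (0 : ℝ) (dist p q),
      ε * ((n : ℝ) - 1) ≤ ric γ t + deriv (xg γ) t)
    (hric_le : ∀ {p q : M} (γ : Geo p q), ∀ t ∈ Set.Icc (0 : ℝ) (dist p q),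
      ric γ t ≤ (n : ℝ) - 1)
    (hminimal : ∀ {p q : M} (γ : Geo p q) (φ : ℝ → ℝ), φ 0 = 0 → φ (dist p q) = 0 →
      (∀ t, DifferentiableAt ℝ φ t) → Continuous (deriv φ) →
      0 ≤ ∫ t in (0 : ℝ)..(dist p q),
        (((n : ℝ) - 1) * (deriv φ t) ^ 2 - (φ t) ^ 2 * ric γ t))
    (p q : M)
    (hd : (((n : ℝ) - 1) * Real.pi + ‖X p‖) / (((n : ℝ) - 1) * ε) < dist p q) :
    ¬ (∀ V : T q, ∃ γ : Geo p q, ⟪endV γ, V⟫ ≤ 0) :=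
  stmt_11_general n hn ε hε X Geo startV endV hstart_unit ric xg hxg0 hxgd hric_cont hxg_deriv
    hxg_deriv_cont hricX hric_le hminimal p q hd
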